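/- arXiv:2507.05392 — 2 statements merged into one kernel-verified Lean document; each statement's English description precedes it below -/
import Mathlib

section
/- Let F be a field of characteristic 2, let n and K be natural numbers with K ≤ n, and let C ⊆ F^n be a linear code. Let u ∈ F^n satisfy the four-wise iso-orthogonality property: for all c1, c2, c3, c4 ∈ C, ∑_{k=1}^n u_k (c1)_k (c2)_k (c3)_k (c4)_k = 0. Fix indices A, B, C0 ∈ {1,…,K}, and let g ∈ C be a codeword whose first K coordinates are g_{A'} = 1 if A' = A and g_{A'} = 0 for all other A' ∈ {1,…,K}. Let π1 and π2 be permutations of {1,…,n} such that for every c ∈ C the vectors k ↦ c_{π1(k)} and k ↦ c_{π2(k)} again belong to C, and such that π1(A) = B and π2(A) = C0. Then for every codeword c ∈ C it holds that ∑_{k=K+1}^n u_k g_k c_k c_{π1(k)} c_{π2(k)} = u_A · c_A · c_B · c_{C0}. (This is the classical identity underlying the intra-block logical CCZ gate of Theorem 3.7.) -/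
/-- The classical identity underlying the intra-block logical CCZ gate (Theorem 3.7):
for a linear code `C ⊆ F^n` over a field `F` of characteristic 2, a vector `u`
satisfying the four-wise iso-orthogonality property, a systematic codeword `g`
(whose first `K` coordinates are the indicator of `A`), and permutations `π1, π2`
preserving `C` with `π1 A = B` and `π2 A = C0`, the weighted sum over the last
`n - K` coordinates collapses to `u_A · c_A · c_B · c_{C0}`. -/
theorem intra_block_CCZ_identity
    (F : Type*) [Field F] [CharP F 2]
    (n K : ℕ) (hK : K ≤ n)
    (C : Submodule F (Fin n → F))
    (u : Fin n → F)
    (hu : ∀ c1 ∈ C, ∀ c2 ∈ C, ∀ c3 ∈ C, ∀ c4 ∈ C,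
      ∑ k : Fin n, u k * c1 k * c2 k * c3 k * c4 k = 0)
    (A B C0 : Fin n) (hA : (A : ℕ) < K) (hB : (B : ℕ) < K) (hC0 : (C0 : ℕ) < K)
    (g : Fin n → F) (hg : g ∈ C)
    (hgA : g A = 1)
    (hg0 : ∀ A' : Fin n, (A' : ℕ) < K → A' ≠ A → g A' = 0)
    (π1 π2 : Equiv.Perm (Fin n))
    (hπ1 : ∀ c ∈ C, (fun k => c (π1 k)) ∈ C)
    (hπ2 : ∀ c ∈ C, (fun k => c (π2 k)) ∈ C)
    (hπ1A : π1 A = B) (hπ2A : π2 A = C0) :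
    ∀ c ∈ C,
      ∑ k ∈ Finset.univ.filter (fun k : Fin n => K ≤ (k : ℕ)),
        u k * g k * c k * c (π1 k) * c (π2 k)
      = u A * c A * c B * c C0 := by
  intro c hc
  have h0 := hu g hg c hc _ (hπ1 c hc) _ (hπ2 c hc)
  have hsplit := Finset.sum_filter_add_sum_filter_not Finset.univ
    (fun k : Fin n => K ≤ (k : ℕ)) (fun k => u k * g k * c k * c (π1 k) * c (π2 k))
  rw [h0] at hsplit
  have hlow : ∑ k ∈ Finset.univ.filter (fun k : Fin n => ¬ K ≤ (k : ℕ)),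
      u k * g k * c k * c (π1 k) * c (π2 k) = u A * c A * c B * c C0 := by
    rw [Finset.sum_eq_single A]
    · rw [hgA, hπ1A, hπ2A]; ring
    · intro k hk hkA
      simp only [Finset.mem_filter, not_le] at hk
      rw [hg0 k hk.2 hkA]; ring
    · intro hAmem
      simp only [Finset.mem_filter, not_le] at hAmem
      exact absurd hA (by simpa using hAmem)
  rw [hlow] at hsplit
  have h2 : (2 : F) = 0 := by exact_mod_cast CharP.cast_eq_zero F 2
  linear_combination hsplit - (u A * c A * c B * c C0) * h2
end

section
/- Let F be a field of characteristic 2, let n and K be natural numbers with K ≤ n, and let C ⊆ F^n be a linear code. Let u ∈ F^n satisfy the four-wise iso-orthogonality property: for all c1, c2, c3, c4 ∈ C, ∑_{k=1}^n u_k (c1)_k (c2)_k (c3)_k (c4)_k = 0. Fix indices A, B, C0 ∈ {1,…,K}, and let g ∈ C be a codeword whose first K coordinates are g_{A'} = 1 if A' = A and g_{A'} = 0 for all other A' ∈ {1,…,K}. Let π1 and π2 be permutations of {1,…,n} such that for every c ∈ C the vectors k ↦ c_{π1(k)} and k ↦ c_{π2(k)} again belong to C, and such that π1(A) = B and π2(A)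 = C0. Then for all codewords c1, c2, c3 ∈ C it holds that ∑_{k=K+1}^n u_k g_k (c1)_k (c2)_{π1(k)} (c3)_{π2(k)} = u_A · (c1)_A · (c2)_B · (c3)_{C0}. (This is the classical identity underlying the inter-block logical CCZ gate of Theorem 3.11.) -/
/-- The classical identity underlying the inter-block logical CCZ gate (Theorem 3.11):
same setup as the intra-block case, but now with three possibly different codewords
`c1, c2, c3 ∈ C` (encoding logical states in three distinct code blocks). -/
theorem inter_block_CCZ_identity
    (F : Type*) [Field F] [CharP F 2]
    (n K : ℕ) (hK : K ≤ n)
    (C : Submodule F (Fin n → F))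
    (u : Fin n → F)
    (hu : ∀ c1 ∈ C, ∀ c2 ∈ C, ∀ c3 ∈ C, ∀ c4 ∈ C,
      ∑ k : Fin n, u k * c1 k * c2 k * c3 k * c4 k = 0)
    (A B C0 : Fin n) (hA : (A : ℕ) < K) (hB : (B : ℕ) < K) (hC0 : (C0 : ℕ) < K)
    (g : Fin n → F) (hg : g ∈ C)
    (hgA : g A = 1)
    (hg0 : ∀ A' : Fin n, (A' : ℕ) < K → A' ≠ A → g A' = 0)
    (π1 π2 : Equiv.Perm (Fin n))
    (hπ1 : ∀ c ∈ C, (fun k => c (π1 k)) ∈ C)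
    (hπ2 : ∀ c ∈ C, (fun k => c (π2 k)) ∈ C)
    (hπ1A : π1 A = B) (hπ2A : π2 A = C0) :
    ∀ c1 ∈ C, ∀ c2 ∈ C, ∀ c3 ∈ C,
      ∑ k ∈ Finset.univ.filter (fun k : Fin n => K ≤ (k : ℕ)),
        u k * g k * c1 k * c2 (π1 k) * c3 (π2 k)
      = u A * c1 A * c2 B * c3 C0 := by
  intro c1 hc1 c2 hc2 c3 hc3
  have htot : ∑ k : Fin n, u k * g k * c1 k * c2 (π1 k) * c3 (π2 k) = 0 :=
    hu g hg c1 hc1 _ (hπ1 c2 hc2) _ (hπ2 c3 hc3)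
  have hsplit : (∑ k ∈ Finset.univ.filter (fun k : Fin n => K ≤ (k : ℕ)),
        u k * g k * c1 k * c2 (π1 k) * c3 (π2 k))
      + (∑ k ∈ Finset.univ.filter (fun k : Fin n => ¬ K ≤ (k : ℕ)),
        u k * g k * c1 k * c2 (π1 k) * c3 (π2 k))
      = ∑ k : Fin n, u k * g k * c1 k * c2 (π1 k) * c3 (π2 k) :=
    Finset.sum_filter_add_sum_filter_not _ _ _
  have hlow : (∑ k ∈ Finset.univ.filter (fun k : Fin n => ¬ K ≤ (k : ℕ)),
        u k * g k * c1 k * c2 (π1 k) * c3 (π2 k))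
      = u A * c1 A * c2 B * c3 C0 := by
    rw [Finset.sum_eq_single A]
    · rw [hgA, hπ1A, hπ2A]; ring
    · intro k hk hkA
      simp only [Finset.mem_filter, not_le] at hk
      rw [hg0 k hk.2 hkA]; ring
    · intro hAmem
      simp only [Finset.mem_filter, not_le] at hAmem
      exact absurd ⟨Finset.mem_univ A, hA⟩ hAmem
  rw [hlow, htot] at hsplit
  have := eq_neg_of_add_eq_zero_left hsplit
  rw [this, CharTwo.neg_eq]
end
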